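/- Let n ≥ 3, M be positive integers with n odd, 3 | n, v₃(n) ≠ 1 + v₃(M), and suppose M³(n-1)²(n+4)⁴A⁷/(54·n⁴(n+1)²·R(n,M)) is a nonzero integer, where A = 6M - n(n+1)(n+5) and R(n,M) is the explicit degree-6 polynomial in M. Then n divides M. -/
import Mathlib

private theorem pvi_pow {p : ℕ} [Fact p.Prime] {x : ℤ} (hx : x ≠ 0) (k : ℕ) :
    padicValInt p (x ^ k) = k * padicValInt p x := by
  induction k with
  | zero => simp [padicValInt.one]
  | succ k ih =>
    rw [pow_succ, padicValInt.mul (pow_ne_zero _ hx) hx, ih]; ring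

private theorem aux (p : ℕ) (hp : p.Prime) (hp2 : p ≠ 2) (n M A R : ℤ)
    (hn : 3 ≤ n) (hM0 : M ≠ 0) (hA0 : A ≠ 0)
    (hA : A = 6*M - n*(n+1)*(n+5))
    (hR : R = 2^14*3^6*M^6 - 2^13*3^7*n*(n+1)*(n+3)*M^5 + 2^9*3^5*n^2*(n+1)*(n^4+93*n^3+629*n^2+1339*n+818)*M^4 - 2^7*3^4*n^3*(n+1)^2*(13*n^5+436*n^4+3688*n^3+12782*n^2+19163*n+9998)*M^3 + 2^2*3^3*n^4*(n+1)^3*(n+2)*(n+7)^2*(5*n^4+447*n^3+3303*n^2+7873*n+5652)*M^2 - 2^2*3^3*n^5*(n+1)^4*(n+2)^2*(n+5)^2*(n+7)^3*(3*n+5)*M + n^6*(n+1)^5*(n+2)^3*(n+5)^3*(n+7)^4)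
    (hpn : (p:ℤ) ∣ n)
    (hN0 : M^3*(n-1)^2*(n+4)^4*A^7 ≠ 0)
    (hdvd : 54*n^4*(n+1)^2*R ∣ M^3*(n-1)^2*(n+4)^4*A^7)
    (hv3' : p = 3 → padicValInt 3 n ≠ 1 + padicValInt 3 M) :
    padicValInt p n ≤ padicValInt p M := by
  haveI hpf : Fact p.Prime := ⟨hp⟩
  have hq : Prime ((p:ℕ):ℤ) := Int.prime_iff_natAbs_prime.mpr (by simpa)
  set a := padicValInt p n with ha'
  set b := padicValInt p M with hb'
  by_contra hcon
  push_neg at hcon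
  have hn0 : n ≠ 0 := by omega
  have h1ne : n - 1 ≠ 0 := by omega
  have h4ne : n + 4 ≠ 0 := by omega
  have hval : ∀ x : ℤ, x ≠ 0 → ∀ k : ℕ, ((p:ℤ)^k ∣ x ↔ k ≤ padicValInt p x) := by
    intro x hx k
    rw [padicValInt_dvd_iff]
    exact or_iff_right hx
  have hpa : (p:ℤ)^a ∣ n := padicValInt_dvd n
  have hpb : (p:ℤ)^b ∣ M := padicValInt_dvd M
  -- p does not divide n-1, n+1, n+4
  have hnd1 : ¬ (p:ℤ) ∣ (n-1) := by
    intro h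
    have h2 := dvd_sub hpn h
    rw [show n - (n-1) = 1 by ring] at h2
    exact hq.not_unit (isUnit_of_dvd_one h2)
  have hnd2 : ¬ (p:ℤ) ∣ (n+1) := by
    intro h
    have h2 := dvd_sub h hpn
    rw [show (n+1) - n = 1 by ring] at h2
    exact hq.not_unit (isUnit_of_dvd_one h2)
  have hnd4 : ¬ (p:ℤ) ∣ (n+4) := by
    intro h
    have h2 := dvd_sub h hpn
    rw [show (n+4) - n = 2*2 by ring] at h2
    have h3 : ((p:ℕ):ℤ) ∣ 2 := (hq.dvd_mul.mp h2).elim id id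
    have h4 : (p:ℕ) ∣ 2 := by
      rwa [show (2:ℤ) = ((2:ℕ):ℤ) by norm_num, Int.natCast_dvd_natCast] at h3
    have := Nat.le_of_dvd (by norm_num) h4
    have := hp.two_le
    omega
  have f1 : padicValInt p (n-1) = 0 := padicValInt.eq_zero_of_not_dvd hnd1
  have f4 : padicValInt p (n+4) = 0 := padicValInt.eq_zero_of_not_dvd hnd4
  have hfN : padicValInt p (M^3*(n-1)^2*(n+4)^4*A^7) = 3*b + 7*padicValInt p A := by
    rw [padicValInt.mul (mul_ne_zero (mul_ne_zero (pow_ne_zero _ hM0) (pow_ne_zero _ h1ne)) (pow_ne_zero _ h4ne)) (pow_ne_zero _ hA0),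
        padicValInt.mul (mul_ne_zero (pow_ne_zero _ hM0) (pow_ne_zero _ h1ne)) (pow_ne_zero _ h4ne),
        padicValInt.mul (pow_ne_zero _ hM0) (pow_ne_zero _ h1ne),
        pvi_pow hM0, pvi_pow h1ne, pvi_pow h4ne, pvi_pow hA0, f1, f4]
    ring
  have h6M0 : (6:ℤ)*M ≠ 0 := mul_ne_zero (by norm_num) hM0
  by_cases hp3 : p = 3
  · -- p = 3
    have hne := hv3' hp3
    subst hp3
    have hc : ((3:ℕ):ℤ) = (3:ℤ) := by norm_num
    rw [hc] at hpa hpb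
    simp only [hc] at hval
    have hba : b + 2 ≤ a := by omega
    have f6 : padicValInt 3 (6:ℤ) = 1 := by
      rw [show (6:ℤ) = 2 * ((3:ℕ):ℤ) by norm_num,
          padicValInt.mul (by norm_num) (by norm_num),
          padicValInt.eq_zero_of_not_dvd (by norm_num), padicValInt_self]
    have f6M : padicValInt 3 ((6:ℤ)*M) = 1 + b := by
      rw [padicValInt.mul (by norm_num) hM0, f6]
    have hpn2 : (3:ℤ)^(b+2) ∣ n := (pow_dvd_pow _ hba).trans hpa
    have hfA : padicValInt 3 A ≤ 1 + b := by
      by_contra hfa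
      push_neg at hfa
      have h1 : (3:ℤ)^(b+2) ∣ A := (hval A hA0 (b+2)).mpr (by omega)
      have h2 : (3:ℤ)^(b+2) ∣ n*((n+1)*(n+5)) := hpn2.mul_right _
      have h3' : (3:ℤ)^(b+2) ∣ 6*M := by
        rw [show (6:ℤ)*M = A + n*((n+1)*(n+5)) by rw [hA]; ring]
        exact dvd_add h1 h2
      have h4 := (hval (6*M) h6M0 (b+2)).mp h3'
      rw [f6M] at h4
      omega
    obtain ⟨x, hx⟩ := hpn2
    obtain ⟨y, hy⟩ := hpb
    have hRdvd : (3:ℤ)^(6*b+6) ∣ R := by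
      refine ⟨2^14*y^6 - 2^13*3^3*x*(n+1)*(n+3)*y^5 + 2^9*3^3*x^2*(n+1)*(n^4+93*n^3+629*n^2+1339*n+818)*y^4 - 2^7*3^4*x^3*(n+1)^2*(13*n^5+436*n^4+3688*n^3+12782*n^2+19163*n+9998)*y^3 + 2^2*3^5*x^4*(n+1)^3*(n+2)*(n+7)^2*(5*n^4+447*n^3+3303*n^2+7873*n+5652)*y^2 - 2^2*3^7*x^5*(n+1)^4*(n+2)^2*(n+5)^2*(n+7)^3*(3*n+5)*y + 3^6*x^6*(n+1)^5*(n+2)^3*(n+5)^3*(n+7)^4, ?_⟩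
      rw [hR, hx, hy]
      ring
    have hcalc : (3:ℤ)^(3 + a*4 + (6*b+6)) ∣ 54*n^4*(n+1)^2*R := by
      have h54 : (3:ℤ)^3 ∣ 54 := ⟨2, by norm_num⟩
      have h1 : (3:ℤ)^3 * ((3:ℤ)^a)^4 * (3:ℤ)^(6*b+6) ∣ 54 * n^4 * R :=
        mul_dvd_mul (mul_dvd_mul h54 (pow_dvd_pow_of_dvd hpa 4)) hRdvd
      have h2 : (54:ℤ) * n^4 * R ∣ 54*n^4*(n+1)^2*R := ⟨(n+1)^2, by ring⟩
      calc (3:ℤ)^(3 + a*4 + (6*b+6)) = (3:ℤ)^3 * ((3:ℤ)^a)^4 * (3:ℤ)^(6*b+6) := by ring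
        _ ∣ 54 * n^4 * R := h1
        _ ∣ _ := h2
    have hfinal := (hval _ hN0 _).mp (hcalc.trans hdvd)
    rw [hfN] at hfinal
    omega
  · -- p ≠ 3
    have hba : b + 1 ≤ a := hcon
    have hnd6 : ¬ (p:ℤ) ∣ 6 := by
      intro h
      rw [show (6:ℤ) = 2*3 by norm_num] at h
      have h3 : ((p:ℕ):ℤ) ∣ 2 ∨ ((p:ℕ):ℤ) ∣ 3 := hq.dvd_mul.mp h
      have h4 : (p:ℕ) ∣ 2 ∨ (p:ℕ) ∣ 3 := by
        rcases h3 with h3 | h3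
        · left; rwa [show (2:ℤ) = ((2:ℕ):ℤ) by norm_num, Int.natCast_dvd_natCast] at h3
        · right; rwa [show (3:ℤ) = ((3:ℕ):ℤ) by norm_num, Int.natCast_dvd_natCast] at h3
      have := hp.two_le
      rcases h4 with h4 | h4 <;> have := Nat.le_of_dvd (by norm_num) h4 <;> interval_cases p <;> simp_all
    have f6 : padicValInt p (6:ℤ) = 0 := padicValInt.eq_zero_of_not_dvd hnd6
    have f6M : padicValInt p ((6:ℤ)*M) = b := by
      rw [padicValInt.mul (by norm_num) hM0, f6]; omega
    have hpn1 : (p:ℤ)^(b+1) ∣ n := (pow_dvd_pow _ hba).trans hpa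
    have hfA : padicValInt p A ≤ b := by
      by_contra hfa
      push_neg at hfa
      have h1 : (p:ℤ)^(b+1) ∣ A := (hval A hA0 (b+1)).mpr (by omega)
      have h2 : (p:ℤ)^(b+1) ∣ n*((n+1)*(n+5)) := hpn1.mul_right _
      have h3' : (p:ℤ)^(b+1) ∣ 6*M := by
        rw [show (6:ℤ)*M = A + n*((n+1)*(n+5)) by rw [hA]; ring]
        exact dvd_add h1 h2
      have h4 := (hval (6*M) h6M0 (b+1)).mp h3'
      rw [f6M] at h4
      omega
    have hpnb : (p:ℤ)^b ∣ n := (pow_dvd_pow _ (by omega : b ≤ a)).trans hpa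
    obtain ⟨x, hx⟩ := hpnb
    obtain ⟨y, hy⟩ := hpb
    have hRdvd : (p:ℤ)^(6*b) ∣ R := by
      refine ⟨2^14*3^6*y^6 - 2^13*3^7*x*(n+1)*(n+3)*y^5 + 2^9*3^5*x^2*(n+1)*(n^4+93*n^3+629*n^2+1339*n+818)*y^4 - 2^7*3^4*x^3*(n+1)^2*(13*n^5+436*n^4+3688*n^3+12782*n^2+19163*n+9998)*y^3 + 2^2*3^3*x^4*(n+1)^3*(n+2)*(n+7)^2*(5*n^4+447*n^3+3303*n^2+7873*n+5652)*y^2 - 2^2*3^3*x^5*(n+1)^4*(n+2)^2*(n+5)^2*(n+7)^3*(3*n+5)*y + x^6*(n+1)^5*(n+2)^3*(n+5)^3*(n+7)^4, ?_⟩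
      rw [hR, hx, hy]
      ring
    have hcalc : (p:ℤ)^(a*4 + 6*b) ∣ 54*n^4*(n+1)^2*R := by
      have h1 : ((p:ℤ)^a)^4 * (p:ℤ)^(6*b) ∣ n^4 * R :=
        mul_dvd_mul (pow_dvd_pow_of_dvd hpa 4) hRdvd
      have h2 : n^4 * R ∣ 54*n^4*(n+1)^2*R := ⟨54*(n+1)^2, by ring⟩
      calc (p:ℤ)^(a*4 + 6*b) = ((p:ℤ)^a)^4 * (p:ℤ)^(6*b) := by ring
        _ ∣ n^4 * R := h1
        _ ∣ _ := h2
    have hfinal := (hval _ hN0 _).mp (hcalc.trans hdvd)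
    rw [hfN] at hfinal
    omega

theorem stmt (n M : ℤ) (hn : 3 ≤ n) (hM : 0 < M)
    (A : ℤ) (hA : A = 6*M - n*(n+1)*(n+5))
    (R : ℤ) (hR : R = 2^14*3^6*M^6 - 2^13*3^7*n*(n+1)*(n+3)*M^5 + 2^9*3^5*n^2*(n+1)*(n^4+93*n^3+629*n^2+1339*n+818)*M^4 - 2^7*3^4*n^3*(n+1)^2*(13*n^5+436*n^4+3688*n^3+12782*n^2+19163*n+9998)*M^3 + 2^2*3^3*n^4*(n+1)^3*(n+2)*(n+7)^2*(5*n^4+447*n^3+3303*n^2+7873*n+5652)*M^2 - 2^2*3^3*n^5*(n+1)^4*(n+2)^2*(n+5)^2*(n+7)^3*(3*n+5)*M + n^6*(n+1)^5*(n+2)^3*(n+5)^3*(n+7)^4)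
    (hint : ∃ k : ℤ, k ≠ 0 ∧
      ((M^3*(n-1)^2*(n+4)^4*A^7 : ℚ) / (54*n^4*(n+1)^2*R) = (k : ℚ))) (hodd : Odd n) (h3n : 3 ∣ n)
    (hv3 : padicValInt 3 n ≠ 1 + padicValInt 3 M) :
    n ∣ M := by
  obtain ⟨k, hk0, hkq⟩ := hint
  have hNQ : (((M^3*(n-1)^2*(n+4)^4*A^7 : ℤ)):ℚ) = (M^3*(n-1)^2*(n+4)^4*A^7 : ℚ) := by
    push_cast; ring
  have hDQ : (((54*n^4*(n+1)^2*R : ℤ)):ℚ) = (54*n^4*(n+1)^2*R : ℚ) := by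
    push_cast; ring
  rw [← hNQ, ← hDQ] at hkq
  have hD0 : (54*n^4*(n+1)^2*R : ℤ) ≠ 0 := by
    intro h
    rw [h] at hkq
    simp only [Int.cast_zero, div_zero] at hkq
    exact hk0 (by exact_mod_cast hkq.symm)
  have hNk : ((M^3*(n-1)^2*(n+4)^4*A^7 : ℤ):ℚ) = (k:ℚ) * ((54*n^4*(n+1)^2*R : ℤ):ℚ) := by
    rw [div_eq_iff (by exact_mod_cast hD0)] at hkq
    exact hkq
  have hNk' : M^3*(n-1)^2*(n+4)^4*A^7 = k * (54*n^4*(n+1)^2*R) := by exact_mod_cast hNk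
  have hdvd : (54*n^4*(n+1)^2*R : ℤ) ∣ M^3*(n-1)^2*(n+4)^4*A^7 := ⟨k, by rw [hNk']; ring⟩
  have hN0 : M^3*(n-1)^2*(n+4)^4*A^7 ≠ 0 := by
    rw [hNk']
    exact mul_ne_zero hk0 hD0
  have hM0 : M ≠ 0 := hM.ne'
  have hA0 : A ≠ 0 := by
    intro h
    apply hN0
    rw [h]; ring
  have hn0 : n ≠ 0 := by omega
  rw [← Int.natAbs_dvd_natAbs]
  refine (Nat.factorization_le_iff_dvd (Int.natAbs_ne_zero.mpr hn0) (Int.natAbs_ne_zero.mpr hM0)).mp ?_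
  rw [Finsupp.le_def]
  intro p
  by_cases hp : p.Prime
  · by_cases hpn : (p:ℤ) ∣ n
    · rw [Nat.factorization_def _ hp, Nat.factorization_def _ hp]
      have hp2 : p ≠ 2 := by
        intro h2
        subst h2
        have : ¬ (2:ℤ) ∣ n := by
          rw [← even_iff_two_dvd, ← Int.not_odd_iff_even]
          exact not_not.mpr hodd
        exact this (by exact_mod_cast hpn)
      exact aux p hp hp2 n M A R hn hM0 hA0 hA hR hpn hN0 hdvd (fun h3 => hv3)
    · rw [Nat.factorization_eq_zero_of_not_dvd (by rwa [← Int.natCast_dvd] )]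
      exact Nat.zero_le _
  · rw [Nat.factorization_eq_zero_of_not_prime _ hp]
    exact Nat.zero_le _
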